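/- arXiv:1311.2661 — 2 statements merged into one kernel-verified Lean document; each statement's English description precedes it below -/
import Mathlib

section
/- Let (x*, u*) be any primal–dual optimal pair of the LP and define C_* := max(‖x* − x̄‖, ‖u* − ū‖). Then the unique solution x(β) of the regularized quadratic penalty problem satisfies ‖A x(β) − b‖ ≤ β^{-1}[‖u* − ū‖ + √(‖u* − ū‖² + ‖x* − x̄‖²)] ≤ β^{-1}(1+√2) C_*, and ‖x(β) − x̄‖ ≤ [2‖u* − ū‖(‖u* − ū‖ + √(‖u* − ū‖² + ‖x* − x̄‖²)) + ‖x* − x̄‖²]^{1/2} ≤ √6 C_*. -/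
open Matrix Finset MeasureTheory ProbabilityTheory

/-- Euclidean norm of a finitely-indexed real vector. -/
noncomputable def l2norm {ι : Type*} [Fintype ι] (x : ι → ℝ) : ℝ :=
  Real.sqrt (∑ i, (x i) ^ 2)

/-- Frobenius norm of a real matrix. -/
noncomputable def frobNorm {ι κ : Type*} [Fintype ι] [Fintype κ] (A : Matrix ι κ ℝ) : ℝ :=
  Real.sqrt (∑ i, ∑ j, (A i j) ^ 2)

/-- Euclidean inner product. -/
noncomputable def rdot {ι : Type*} [Fintype ι] (a b : ι → ℝ) : ℝ := ∑ i, a i * b i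

/-- The regularized quadratic penalty objective
`f_β(x) = cᵀx − ūᵀ(Ax−b) + (β/2)‖Ax−b‖² + (1/(2β))‖x−x̄‖²`. -/
noncomputable def fpen {ι κ : Type*} [Fintype ι] [Fintype κ]
    (A : Matrix ι κ ℝ) (b : ι → ℝ) (c : κ → ℝ) (ub : ι → ℝ) (xb : κ → ℝ)
    (β : ℝ) (x : κ → ℝ) : ℝ :=
  rdot c x - rdot ub (A.mulVec x - b) + (β / 2) * l2norm (A.mulVec x - b) ^ 2
    + (1 / (2 * β)) * l2norm (x - xb) ^ 2

/-!
Test the penalty objective at the primal optimum `x*`, where it equals `cᵀx* + ‖x* − x̄‖²/(2β)`.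
At any `x ≥ 0`, dual feasibility of `u*` and strong duality give `cᵀx − u*ᵀ(Ax − b) ≥ bᵀu* = cᵀx*`,
and Cauchy–Schwarz bounds `(u* − ū)ᵀ(Ax − b)` below by `−‖u* − ū‖ ρ` with `ρ = ‖Ax − b‖`.
Comparing the two at the minimizer `x(β)` leaves the quadratic inequality
`(βρ)² − 2‖u* − ū‖ (βρ) + ‖x(β) − x̄‖² ≤ ‖x* − x̄‖²`, which is solved for `βρ` and then for
`‖x(β) − x̄‖`.
-/

section PenaltyObjective

variable {ι κ : Type*} [Fintype ι] [Fintype κ]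

lemma rdot_eq_dotProduct (a v : ι → ℝ) : rdot a v = a ⬝ᵥ v := rfl

lemma l2norm_nonneg (x : ι → ℝ) : 0 ≤ l2norm x := Real.sqrt_nonneg _

lemma neg_l2norm_mul_le_rdot (a v : ι → ℝ) : -(l2norm a * l2norm v) ≤ rdot a v := by
  have h : rdot (-a) v ≤ l2norm (-a) * l2norm v := Real.sum_mul_le_sqrt_mul_sqrt _ _ _
  have hneg : l2norm (-a) = l2norm a := by simp [l2norm]
  rw [hneg, rdot_eq_dotProduct, neg_dotProduct] at h
  rw [rdot_eq_dotProduct]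
  linarith

/-- Weak duality, with the Lagrangian written in the form that appears in `fpen`. -/
lemma rdot_le_lagrangian {A : Matrix ι κ ℝ} (b : ι → ℝ) {c : κ → ℝ} {u : ι → ℝ} {x : κ → ℝ}
    (hu : ∀ j, 0 ≤ (c - Aᵀ *ᵥ u) j) (hx : ∀ j, 0 ≤ x j) :
    rdot b u ≤ rdot c x - rdot u (A *ᵥ x - b) := by
  have hslack : 0 ≤ (c - Aᵀ *ᵥ u) ⬝ᵥ x :=
    Finset.sum_nonneg fun j _ => mul_nonneg (hu j) (hx j)
  rw [sub_dotProduct, mulVec_transpose, ← dotProduct_mulVec] at hslack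
  simp only [rdot_eq_dotProduct, dotProduct_sub, dotProduct_comm u b]
  linarith

lemma fpen_of_mulVec_eq {A : Matrix ι κ ℝ} {b : ι → ℝ} (c : κ → ℝ) (ub : ι → ℝ) (xb : κ → ℝ)
    (β : ℝ) {x : κ → ℝ} (hx : A *ᵥ x = b) :
    fpen A b c ub xb β x = rdot c x + (1 / (2 * β)) * l2norm (x - xb) ^ 2 := by
  simp [fpen, hx, rdot, l2norm]

lemma fpen_ge_of_dual_feasible {A : Matrix ι κ ℝ} (b : ι → ℝ) {c : κ → ℝ} (ub : ι → ℝ)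
    (xb : κ → ℝ) (β : ℝ) {u : ι → ℝ} {x : κ → ℝ}
    (hu : ∀ j, 0 ≤ (c - Aᵀ *ᵥ u) j) (hx : ∀ j, 0 ≤ x j) :
    rdot b u - l2norm (u - ub) * l2norm (A *ᵥ x - b) + (β / 2) * l2norm (A *ᵥ x - b) ^ 2
      + (1 / (2 * β)) * l2norm (x - xb) ^ 2 ≤ fpen A b c ub xb β x := by
  have hdual := rdot_le_lagrangian b hu hx
  have hcs := neg_l2norm_mul_le_rdot (u - ub) (A *ᵥ x - b)
  rw [rdot_eq_dotProduct, sub_dotProduct] at hcs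
  simp only [fpen, rdot_eq_dotProduct] at hdual ⊢
  linarith

lemma penalty_minimizer_quadratic_le {A : Matrix ι κ ℝ} {b : ι → ℝ} {c : κ → ℝ}
    {ub : ι → ℝ} {xb : κ → ℝ} {β : ℝ} (hβ : 0 < β) {xs : κ → ℝ} {us : ι → ℝ}
    (hpfeas : A *ᵥ xs = b) (hdfeas : ∀ j, 0 ≤ (c - Aᵀ *ᵥ us) j)
    (hstrong : rdot c xs = rdot b us) {xβ : κ → ℝ} (hβnn : ∀ j, 0 ≤ xβ j)
    (hβmin : fpen A b c ub xb β xβ ≤ fpen A b c ub xb β xs) :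
    (β * l2norm (A *ᵥ xβ - b)) ^ 2 - 2 * l2norm (us - ub) * (β * l2norm (A *ᵥ xβ - b))
      + l2norm (xβ - xb) ^ 2 ≤ l2norm (xs - xb) ^ 2 := by
  have hlow := fpen_ge_of_dual_feasible b ub xb β hdfeas hβnn
  rw [fpen_of_mulVec_eq c ub xb β hpfeas, hstrong] at hβmin
  have hscaled := mul_le_mul_of_nonneg_left (hlow.trans hβmin) (by positivity : 0 ≤ 2 * β)
  field_simp at hscaled
  nlinarith [hscaled]

end PenaltyObjective

section QuadraticBounds

variable {t d U X : ℝ}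

lemma le_add_sqrt_of_quadratic_le (h : t ^ 2 - 2 * U * t + d ^ 2 ≤ X ^ 2) :
    t ≤ U + Real.sqrt (U ^ 2 + X ^ 2) := by
  have habs : |t - U| ≤ Real.sqrt (U ^ 2 + X ^ 2) :=
    Real.abs_le_sqrt (by nlinarith [sq_nonneg d])
  linarith [le_abs_self (t - U)]

lemma le_sqrt_of_quadratic_le (hU : 0 ≤ U) (h : t ^ 2 - 2 * U * t + d ^ 2 ≤ X ^ 2) :
    d ≤ Real.sqrt (2 * U * (U + Real.sqrt (U ^ 2 + X ^ 2)) + X ^ 2) := by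
  have ht := mul_le_mul_of_nonneg_left (le_add_sqrt_of_quadratic_le h) hU
  have hsq : d ^ 2 ≤ 2 * U * (U + Real.sqrt (U ^ 2 + X ^ 2)) + X ^ 2 := by
    nlinarith [sq_nonneg t]
  exact (le_abs_self d).trans (Real.abs_le_sqrt hsq)

variable {C : ℝ}

lemma add_sqrt_sq_add_sq_le (hU : 0 ≤ U) (hX : 0 ≤ X) (hUC : U ≤ C) (hXC : X ≤ C) :
    U + Real.sqrt (U ^ 2 + X ^ 2) ≤ (1 + Real.sqrt 2) * C := by
  have hC : 0 ≤ C := hU.trans hUC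
  have hS : Real.sqrt (U ^ 2 + X ^ 2) ≤ Real.sqrt 2 * C := by
    rw [Real.sqrt_le_left (by positivity), mul_pow, Real.sq_sqrt zero_le_two]
    nlinarith
  linarith

lemma sqrt_distance_bound_le_sqrt_six_mul (hU : 0 ≤ U) (hX : 0 ≤ X) (hUC : U ≤ C) (hXC : X ≤ C) :
    Real.sqrt (2 * U * (U + Real.sqrt (U ^ 2 + X ^ 2)) + X ^ 2) ≤ Real.sqrt 6 * C := by
  have hC : 0 ≤ C := hU.trans hUC
  have hsum := add_sqrt_sq_add_sq_le hU hX hUC hXC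
  have hprod := mul_le_mul hUC hsum (by positivity) hC
  rw [Real.sqrt_le_left (by positivity), mul_pow, Real.sq_sqrt (by norm_num)]
  nlinarith [Real.sqrt_two_lt_three_halves]

end QuadraticBounds

/-- explicit residual and distance bounds for the solution of the
regularized quadratic penalty problem (Lemma of the appendix). -/
theorem qp_penalty_residual_bounds
    {m n : ℕ} (A : Matrix (Fin m) (Fin n) ℝ) (b : Fin m → ℝ) (c : Fin n → ℝ)
    (ub : Fin m → ℝ) (xb : Fin n → ℝ) (β : ℝ) (hβ : 0 < β)
    -- (x*, u*) : any primal–dual optimal pair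
    (xs : Fin n → ℝ) (us : Fin m → ℝ)
    (hpfeas : A.mulVec xs = b) (hppos : ∀ j, 0 ≤ xs j)
    (hdfeas : ∀ j, 0 ≤ (c - Aᵀ.mulVec us) j)
    (hstrong : rdot c xs = rdot b us)
    (Cs : ℝ) (hCs : Cs = max (l2norm (xs - xb)) (l2norm (us - ub)))
    -- x(β) : the minimizer of f_β over the nonnegative orthant
    (xβ : Fin n → ℝ) (hβnn : ∀ j, 0 ≤ xβ j)
    (hβmin : ∀ x : Fin n → ℝ, (∀ j, 0 ≤ x j) →
      fpen A b c ub xb β xβ ≤ fpen A b c ub xb β x) :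
    l2norm (A.mulVec xβ - b) ≤
      β⁻¹ * (l2norm (us - ub)
        + Real.sqrt (l2norm (us - ub) ^ 2 + l2norm (xs - xb) ^ 2)) ∧
    β⁻¹ * (l2norm (us - ub)
        + Real.sqrt (l2norm (us - ub) ^ 2 + l2norm (xs - xb) ^ 2)) ≤
      β⁻¹ * (1 + Real.sqrt 2) * Cs ∧
    l2norm (xβ - xb) ≤
      Real.sqrt (2 * l2norm (us - ub) * (l2norm (us - ub)
        + Real.sqrt (l2norm (us - ub) ^ 2 + l2norm (xs - xb) ^ 2))
        + l2norm (xs - xb) ^ 2) ∧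
    Real.sqrt (2 * l2norm (us - ub) * (l2norm (us - ub)
        + Real.sqrt (l2norm (us - ub) ^ 2 + l2norm (xs - xb) ^ 2))
        + l2norm (xs - xb) ^ 2) ≤ Real.sqrt 6 * Cs := by
  have hquad := penalty_minimizer_quadratic_le hβ hpfeas hdfeas hstrong hβnn
    (hβmin xs hppos)
  set U := l2norm (us - ub)
  set X := l2norm (xs - xb)
  have hU : 0 ≤ U := l2norm_nonneg _
  have hX : 0 ≤ X := l2norm_nonneg _
  have hUC : U ≤ Cs := hCs ▸ le_max_right _ _
  have hXC : X ≤ Cs := hCs ▸ le_max_left _ _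
  refine ⟨?_, ?_, le_sqrt_of_quadratic_le hU hquad, sqrt_distance_bound_le_sqrt_six_mul hU hX hUC hXC⟩
  · rw [le_inv_mul_iff₀ hβ]
    exact le_add_sqrt_of_quadratic_le hquad
  · rw [mul_assoc]
    exact mul_le_mul_of_nonneg_left (add_sqrt_sq_add_sq_le hU hX hUC hXC) (by positivity)
end

section
/- Let (x_j)_{j≥0} be the iterates of the stochastic coordinate descent (SCD) method applied to minimizing f_β over the nonnegative orthant, started from x_0 ≥ 0, with coordinate indices i(j) chosen independently and uniformly at random from {1,…,n}. Suppose ‖x_j − x(β)‖₂ ≤ R holds for all iterates j (almost surely), and let l := 1/β and f_β* := f_β(x(β)). Then for any η ∈ (0,1) and any ε̄ > 0, P(f_β(x_j) − f_β* < ε̄) ≥ 1 − η provided that j ≥ (n(l + L_max)/l) · |log( (L_max/(2 η ε̄)) (R² + (2/L_max)(f_β(x_0) − f_β*)) )|. -/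
open Matrix Finset MeasureTheory ProbabilityTheory

/-- The gradient map `∇f_β(x) = c − Aᵀū + βAᵀ(Ax − b) + (1/β)(x − x̄)` of `f_β`. -/
noncomputable def gradf {ι κ : Type*} [Fintype ι] [Fintype κ]
    (A : Matrix ι κ ℝ) (b : ι → ℝ) (c : κ → ℝ) (ub : ι → ℝ) (xb : κ → ℝ)
    (β : ℝ) (x : κ → ℝ) : κ → ℝ :=
  c - Aᵀ.mulVec ub + β • Aᵀ.mulVec (A.mulVec x - b) + (1 / β) • (x - xb)

/-!
Compare each projected coordinate step with the feasible move of relative length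
`α = l / (l + L_max)` from `x` towards `x(β)` along the chosen coordinate. Coordinate-wise
`L_max`-smoothness and `l`-strong convexity of `f_β` turn this, averaged over the coordinate, into
`E[f_β(x_{j+1}) - f_β*] ≤ (1 - α / n) E[f_β(x_j) - f_β*]`. The iterate `x_j` is a function of the
first `j` indices, whose joint law is uniform on `Fin j → Fin n`, so these expectations are finite
averages over histories. Since `(1 - α / n) ^ j ≤ exp (-j α / n)`, the bound on `j` makes the
expected gap at most `η ε̄`, and Markov's inequality concludes.
-/

section ProjectedCoordinateDescent

variable {κ : Type*} [DecidableEq κ] {f : (κ → ℝ) → ℝ} {g : (κ → ℝ) → κ → ℝ} {L l : ℝ}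

/-- `max 0 (a - g / L)` is the projection onto `[0, ∞)` of the unconstrained minimiser of the
model, and the model is a multiple of the squared distance to that minimiser. -/
lemma quadratic_model_le_of_nonneg {L a g y : ℝ} (hL : 0 < L) (hy : 0 ≤ y) :
    g * (max 0 (a - 1 / L * g) - a) + L / 2 * (max 0 (a - 1 / L * g) - a) ^ 2
      ≤ g * (y - a) + L / 2 * (y - a) ^ 2 := by
  set u := a - 1 / L * g
  have hmodel : ∀ z, g * (z - a) + L / 2 * (z - a) ^ 2 = L / 2 * ((z - u) ^ 2 - (a - u) ^ 2) := by
    intro z; simp only [u]; field_simp; ring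
  have hdist : (max 0 u - u) ^ 2 ≤ (y - u) ^ 2 := by
    rcases le_total u 0 with hu | hu
    · rw [max_eq_left hu]; nlinarith
    · rw [max_eq_right hu, sub_self, zero_pow two_ne_zero]; positivity
  rw [hmodel, hmodel]
  gcongr

noncomputable def projCoordStep (g : (κ → ℝ) → κ → ℝ) (L : ℝ) (x : κ → ℝ) (i : κ) : κ → ℝ :=
  Function.update x i (max 0 (x i - 1 / L * g x i))

lemma projCoordStep_apply (x : κ → ℝ) (i k : κ) :
    projCoordStep g L x i k = if k = i then max 0 (x k - 1 / L * g x k) else x k := by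
  rw [projCoordStep, Function.update_apply]
  split_ifs with h
  · rw [h]
  · rfl

lemma projCoordStep_nonneg {x : κ → ℝ} (hx : 0 ≤ x) (i : κ) : 0 ≤ projCoordStep g L x i := by
  intro k
  rw [projCoordStep_apply]
  split_ifs
  · exact le_max_left _ _
  · exact hx k

lemma projCoordStep_eq_add_single (x : κ → ℝ) (i : κ) :
    projCoordStep g L x i = x + Pi.single i (max 0 (x i - 1 / L * g x i) - x i) := by
  ext k
  rcases eq_or_ne k i with rfl | hk
  · simp [projCoordStep]
  · simp [projCoordStep, hk]

lemma projCoordStep_le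
    (hsmooth : ∀ x i t, f (x + Pi.single i t) ≤ f x + g x i * t + L / 2 * t ^ 2)
    (hL : 0 < L) (x : κ → ℝ) (i : κ) {y : ℝ} (hy : 0 ≤ y) :
    f (projCoordStep g L x i) ≤ f x + g x i * (y - x i) + L / 2 * (y - x i) ^ 2 := by
  rw [projCoordStep_eq_add_single]
  exact (hsmooth _ _ _).trans
    (by linarith [quadratic_model_le_of_nonneg (a := x i) (g := g x i) hL hy])

/-- The iterate after the coordinates `h 0, …, h (j - 1)` have been chosen, in this order. -/
noncomputable def projCoordIter (g : (κ → ℝ) → κ → ℝ) (L : ℝ) (x₀ : κ → ℝ) :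
    (j : ℕ) → (Fin j → κ) → κ → ℝ
  | 0, _ => x₀
  | j + 1, h => projCoordStep g L (projCoordIter g L x₀ j (Fin.init h)) (h (Fin.last j))

lemma projCoordIter_nonneg {x₀ : κ → ℝ} (hx₀ : 0 ≤ x₀) :
    ∀ j h, 0 ≤ projCoordIter g L x₀ j h
  | 0, _ => hx₀
  | j + 1, h => projCoordStep_nonneg (projCoordIter_nonneg hx₀ j (Fin.init h)) _

lemma eq_projCoordIter {Ω : Type*} {idx : ℕ → Ω → κ} {X : ℕ → Ω → κ → ℝ} {x₀ : κ → ℝ}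
    (hX₀ : ∀ ω, X 0 ω = x₀) (hstep : ∀ j ω, X (j + 1) ω = projCoordStep g L (X j ω) (idx j ω))
    (j : ℕ) (ω : Ω) : X j ω = projCoordIter g L x₀ j fun k => idx k ω := by
  induction j with
  | zero => exact hX₀ ω
  | succ j ih => rw [hstep, ih]; rfl

variable [Fintype κ]

/-- Averaged over the coordinate, the step does at least as well as the feasible coordinate move
towards `z` of relative length `l / (l + L)`. -/
lemma sum_projCoordStep_sub_le
    (hsmooth : ∀ x i t, f (x + Pi.single i t) ≤ f x + g x i * t + L / 2 * t ^ 2)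
    (hconvex : ∀ x y, f x + g x ⬝ᵥ (y - x) + l / 2 * ((y - x) ⬝ᵥ (y - x)) ≤ f y)
    (hL : 0 < L) (hl : 0 < l) {x z : κ → ℝ} (hx : 0 ≤ x) (hz : 0 ≤ z) :
    ∑ i, (f (projCoordStep g L x i) - f z) ≤ (Fintype.card κ - l / (l + L)) * (f x - f z) := by
  set α := l / (l + L)
  have hα0 : 0 ≤ α := by positivity
  have hα1 : α ≤ 1 := div_le_one_of_le₀ (by linarith) (by positivity)
  have hLα : L * α ≤ l := by
    rw [mul_div_assoc', div_le_iff₀ (by positivity)]; nlinarith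
  set d := z - x
  have hstep : ∀ i, f (projCoordStep g L x i)
      ≤ f x + g x i * (α * d i) + L / 2 * (α * d i) ^ 2 := fun i => by
    have hy : 0 ≤ x i + α * d i := by
      have hxi : 0 ≤ x i := hx i
      have hzi : 0 ≤ z i := hz i
      simp only [d, Pi.sub_apply]
      nlinarith [mul_nonneg hα0 hzi, mul_nonneg (sub_nonneg.2 hα1) hxi]
    simpa using projCoordStep_le hsmooth hL x i hy
  have hmodel : ∑ i, (f x + g x i * (α * d i) + L / 2 * (α * d i) ^ 2)
      = Fintype.card κ * f x + α * (g x ⬝ᵥ d) + L / 2 * α ^ 2 * (d ⬝ᵥ d) := by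
    simp only [Finset.sum_add_distrib, dotProduct, Finset.mul_sum, Finset.sum_const,
      Finset.card_univ, nsmul_eq_mul]
    congr 1; congr 1
    all_goals exact Finset.sum_congr rfl fun i _ => by ring
  have hconv : α * (g x ⬝ᵥ d) ≤ α * (f z - f x - l / 2 * (d ⬝ᵥ d)) := by
    have := hconvex x z
    gcongr; linarith
  have hdd : L * α * α * (d ⬝ᵥ d) ≤ l * α * (d ⬝ᵥ d) := by
    have : 0 ≤ d ⬝ᵥ d := Finset.sum_nonneg fun _ _ => mul_self_nonneg _
    gcongr
  rw [Finset.sum_sub_distrib, Finset.sum_const, Finset.card_univ, nsmul_eq_mul]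
  have := (Finset.sum_le_sum fun i (_ : i ∈ Finset.univ) => hstep i).trans_eq hmodel
  nlinarith

lemma sum_projCoordIter_succ (F : (κ → ℝ) → ℝ) (x₀ : κ → ℝ) (j : ℕ) :
    ∑ h : Fin (j + 1) → κ, F (projCoordIter g L x₀ (j + 1) h)
      = ∑ h : Fin j → κ, ∑ i, F (projCoordStep g L (projCoordIter g L x₀ j h) i) := by
  rw [← (Fin.snocEquiv fun _ => κ).sum_comp, Fintype.sum_prod_type, Finset.sum_comm]
  simp [projCoordIter, Fin.snocEquiv]

/-- Linear convergence in expectation, with the expectation over `j` uniform indices written as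
`card κ ^ j` times the average over all histories. -/
lemma sum_projCoordIter_sub_le [Nonempty κ]
    (hsmooth : ∀ x i t, f (x + Pi.single i t) ≤ f x + g x i * t + L / 2 * t ^ 2)
    (hconvex : ∀ x y, f x + g x ⬝ᵥ (y - x) + l / 2 * ((y - x) ⬝ᵥ (y - x)) ≤ f y)
    (hL : 0 < L) (hl : 0 < l) {x₀ z : κ → ℝ} (hx₀ : 0 ≤ x₀) (hz : 0 ≤ z) (j : ℕ) :
    ∑ h : Fin j → κ, (f (projCoordIter g L x₀ j h) - f z)
      ≤ (Fintype.card κ - l / (l + L)) ^ j * (f x₀ - f z) := by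
  induction j with
  | zero => simp [projCoordIter]
  | succ j ih =>
    have hrate : 0 ≤ (Fintype.card κ : ℝ) - l / (l + L) := by
      have : l / (l + L) ≤ 1 := div_le_one_of_le₀ (by linarith) (by positivity)
      have : (1 : ℝ) ≤ Fintype.card κ := by exact_mod_cast Fintype.card_pos
      linarith
    rw [sum_projCoordIter_succ (fun x => f x - f z), pow_succ', mul_assoc]
    calc _ ≤ ∑ h : Fin j → κ,
            (Fintype.card κ - l / (l + L)) * (f (projCoordIter g L x₀ j h) - f z) :=
          Finset.sum_le_sum fun h _ =>
            sum_projCoordStep_sub_le hsmooth hconvex hL hl (projCoordIter_nonneg hx₀ j h) hz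
      _ ≤ _ := by rw [← Finset.mul_sum]; gcongr

end ProjectedCoordinateDescent

section PenaltyObjective

variable {ι κ : Type*} [Fintype ι] [Fintype κ]
  (A : Matrix ι κ ℝ) (b : ι → ℝ) (c : κ → ℝ) (ub : ι → ℝ) (xb : κ → ℝ) {β : ℝ}

lemma l2norm_sq (x : κ → ℝ) : l2norm x ^ 2 = x ⬝ᵥ x := by
  rw [l2norm, Real.sq_sqrt (Finset.sum_nonneg fun i _ => sq_nonneg _)]
  simp only [dotProduct, sq]

lemma fpen_add (hβ : β ≠ 0) (x d : κ → ℝ) :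
    fpen A b c ub xb β (x + d) = fpen A b c ub xb β x + gradf A b c ub xb β x ⬝ᵥ d
      + β / 2 * (A *ᵥ d ⬝ᵥ A *ᵥ d) + 1 / (2 * β) * (d ⬝ᵥ d) := by
  have hAx : A *ᵥ (x + d) - b = (A *ᵥ x - b) + A *ᵥ d := by rw [mulVec_add]; abel
  have hx : x + d - xb = (x - xb) + d := by abel
  have hrdot : ∀ u v : κ → ℝ, rdot u v = u ⬝ᵥ v := fun _ _ => rfl
  have hrdot' : ∀ u v : ι → ℝ, rdot u v = u ⬝ᵥ v := fun _ _ => rfl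
  simp only [fpen, gradf, hrdot, hrdot', l2norm_sq, hAx, hx, add_dotProduct, dotProduct_add,
    sub_dotProduct, smul_dotProduct, mulVec_transpose, ← dotProduct_mulVec, smul_eq_mul,
    dotProduct_comm (A *ᵥ d) (A *ᵥ x - b), dotProduct_comm d (x - xb)]
  field_simp
  ring

lemma fpen_add_single_le [DecidableEq κ] (hβ : 0 < β) (x : κ → ℝ) (i : κ) (t : ℝ) :
    fpen A b c ub xb β (x + Pi.single i t) ≤ fpen A b c ub xb β x
      + gradf A b c ub xb β x i * t + (β * (⨆ k, ∑ j, A j k ^ 2) + β⁻¹) / 2 * t ^ 2 := by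
  have hcol : A *ᵥ Pi.single i t ⬝ᵥ A *ᵥ Pi.single i t = t ^ 2 * ∑ j, A j i ^ 2 := by
    simp only [mulVec_single, dotProduct, Finset.mul_sum]
    exact Finset.sum_congr rfl fun j _ => by simp [Matrix.col]; ring
  have hsup : ∑ j, A j i ^ 2 ≤ ⨆ k, ∑ j, A j k ^ 2 :=
    le_ciSup (f := fun k => ∑ j, A j k ^ 2) (Set.finite_range _).bddAbove i
  rw [fpen_add A b c ub xb hβ.ne', dotProduct_single, dotProduct_single, Pi.single_eq_same, hcol]
  have := mul_le_mul_of_nonneg_left hsup (mul_nonneg hβ.le (sq_nonneg t))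
  have e : 1 / (2 * β) * (t * t) = β⁻¹ / 2 * t ^ 2 := by ring
  linarith

lemma fpen_strongConvex (hβ : 0 < β) (x y : κ → ℝ) :
    fpen A b c ub xb β x + gradf A b c ub xb β x ⬝ᵥ (y - x)
      + 1 / β / 2 * ((y - x) ⬝ᵥ (y - x)) ≤ fpen A b c ub xb β y := by
  have hAd : 0 ≤ A *ᵥ (y - x) ⬝ᵥ A *ᵥ (y - x) := Finset.sum_nonneg fun _ _ => mul_self_nonneg _
  have := fpen_add A b c ub xb hβ.ne' x (y - x)
  rw [add_sub_cancel] at this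
  rw [this, show 1 / β / 2 = 1 / (2 * β) by ring]
  linarith [mul_nonneg (half_pos hβ).le hAd]

end PenaltyObjective
section CoordinateHistory

variable {Ω κ : Type*} [MeasurableSpace Ω] {μ : Measure Ω} [Fintype κ] [MeasurableSpace κ]
  [MeasurableSingletonClass κ] {idx : ℕ → Ω → κ}

lemma measure_history_eq (hindep : iIndepFun idx μ)
    (hunif : ∀ j v, μ {ω | idx j ω = v} = (Fintype.card κ : ENNReal)⁻¹) (j : ℕ) (h : Fin j → κ) :
    μ {ω | (fun k : Fin j => idx k ω) = h} = (Fintype.card κ : ENNReal)⁻¹ ^ j := by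
  have hatoms := (hindep.precomp Fin.val_injective).measure_inter_preimage_eq_mul
    (sets := fun k : Fin j => {h k}) Finset.univ fun _ _ => measurableSet_singleton _
  have hevent : {ω | (fun k : Fin j => idx k ω) = h} = ⋂ k ∈ (Finset.univ : Finset (Fin j)), idx k ⁻¹' {h k} := by
    ext ω; simp [funext_iff]
  rw [hevent, hatoms]
  simp [Set.preimage, hunif]

lemma measureReal_history (hmeas : ∀ j, Measurable (idx j)) (hindep : iIndepFun idx μ)
    (hunif : ∀ j v, μ {ω | idx j ω = v} = (Fintype.card κ : ENNReal)⁻¹) (j : ℕ)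
    (P : (Fin j → κ) → Prop) [DecidablePred P] :
    μ.real {ω | P (fun k : Fin j => idx k ω)} = #{h | P h} / Fintype.card κ ^ j := by
  have hhist : Measurable fun ω (k : Fin j) => idx k ω := measurable_pi_lambda _ fun k => hmeas k
  have hevent : {ω | P (fun k : Fin j => idx k ω)}
      = (fun ω (k : Fin j) => idx k ω) ⁻¹' ↑(Finset.univ.filter P) := by
    ext ω; simp
  rw [measureReal_def, hevent, ← sum_measure_preimage_singleton _
    fun h _ => hhist (measurableSet_singleton h)]
  simp only [Set.preimage, Set.mem_singleton_iff, measure_history_eq hindep hunif,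
    Finset.sum_const, nsmul_eq_mul, ENNReal.toReal_mul, ENNReal.toReal_pow, ENNReal.toReal_inv,
    ENNReal.toReal_natCast, div_eq_mul_inv, inv_pow]

lemma card_filter_le_mul_le_sum {α : Type*} (s : Finset α) {F : α → ℝ} (hF : ∀ a ∈ s, 0 ≤ F a)
    (ε : ℝ) : #{a ∈ s | ε ≤ F a} * ε ≤ ∑ a ∈ s, F a := by
  rw [← nsmul_eq_mul]
  refine (Finset.card_nsmul_le_sum _ _ _ fun a ha => (Finset.mem_filter.1 ha).2).trans ?_
  exact Finset.sum_le_sum_of_subset_of_nonneg (Finset.filter_subset _ _) fun a ha _ => hF a ha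

lemma one_sub_le_measureReal_of_sum_le [Nonempty κ] (hmeas : ∀ j, Measurable (idx j))
    (hindep : iIndepFun idx μ)
    (hunif : ∀ j v, μ {ω | idx j ω = v} = (Fintype.card κ : ENNReal)⁻¹) {j : ℕ}
    {F : (Fin j → κ) → ℝ} (hF : 0 ≤ F) {η ε : ℝ} (hε : 0 < ε)
    (hsum : ∑ h, F h ≤ Fintype.card κ ^ j * (η * ε)) :
    1 - η ≤ μ.real {ω | F (fun k : Fin j => idx k ω) < ε} := by
  classical
  rw [measureReal_history hmeas hindep hunif j (fun h => F h < ε)]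
  have hbad : (#{h | ε ≤ F h} : ℝ) ≤ Fintype.card κ ^ j * η := by
    have := (card_filter_le_mul_le_sum Finset.univ (fun h _ => hF h) ε).trans hsum
    rw [← mul_assoc] at this
    exact le_of_mul_le_mul_right this hε
  have hcard : (#{h | F h < ε} : ℝ) + #{h | ε ≤ F h} = Fintype.card κ ^ j := by
    simp only [← not_lt]
    exact_mod_cast (Finset.card_filter_add_card_filter_not _).trans (by simp)
  rw [le_div_iff₀ (by positivity)]
  linarith

end CoordinateHistory

lemma one_sub_inv_pow_mul_le {K M δ φ : ℝ} {j : ℕ} (hK : 1 ≤ K) (hφ : 0 ≤ φ) (hφM : φ ≤ M)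
    (hδ : 0 < δ) (hj : K * |Real.log (M / δ)| ≤ j) : (1 - 1 / K) ^ j * φ ≤ δ := by
  rcases (hφ.trans hφM).eq_or_lt with rfl | hM
  · simp [le_antisymm hφM hφ, hδ.le]
  have hexp : (1 - 1 / K) ^ j ≤ Real.exp (-Real.log (M / δ)) := calc
    (1 - 1 / K) ^ j ≤ Real.exp (-(1 / K)) ^ j := by
      have : 1 / K ≤ 1 := (div_le_one (by linarith)).2 hK
      gcongr
      linarith [Real.add_one_le_exp (-(1 / K))]
    _ = Real.exp (-(j / K)) := by rw [← Real.exp_nat_mul]; ring_nf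
    _ ≤ Real.exp (-Real.log (M / δ)) := by
      gcongr
      rw [le_div_iff₀ (by linarith), mul_comm]
      exact (mul_le_mul_of_nonneg_left (le_abs_self _) (by linarith)).trans hj
  rw [Real.exp_neg, Real.exp_log (by positivity), inv_div] at hexp
  calc (1 - 1 / K) ^ j * φ ≤ δ / M * M := by gcongr
    _ = δ := div_mul_cancel₀ δ hM.ne'

lemma sub_pow_mul_le_of_log_le {N l L R η ε φ : ℝ} {j : ℕ} (hN : 1 ≤ N) (hl : 0 < l)
    (hL : 0 < L) (hφ : 0 ≤ φ) (hη : 0 < η) (hε : 0 < ε)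
    (hj : N * (l + L) / l * |Real.log (L / (2 * η * ε) * (R ^ 2 + 2 / L * φ))| ≤ j) :
    (N - l / (l + L)) ^ j * φ ≤ N ^ j * (η * ε) := by
  have hfactor : N - l / (l + L) = N * (1 - 1 / (N * (l + L) / l)) := by
    field_simp
  have hK : 1 ≤ N * (l + L) / l := by rw [le_div_iff₀ hl]; nlinarith
  have hM : L / (2 * η * ε) * (R ^ 2 + 2 / L * φ) = (L / 2 * R ^ 2 + φ) / (η * ε) := by
    field_simp
  rw [hM] at hj
  rw [hfactor, mul_pow, mul_assoc]
  exact mul_le_mul_of_nonneg_left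
    (one_sub_inv_pow_mul_le hK hφ (by nlinarith [sq_nonneg R]) (by positivity) hj) (by positivity)

theorem scd_high_probability_convergence_general
    {m n : ℕ}
    (A : Matrix (Fin m) (Fin n) ℝ) (b : Fin m → ℝ) (c : Fin n → ℝ)
    (ub : Fin m → ℝ) (xb : Fin n → ℝ) (β : ℝ) (hβ : 0 < β)
    -- x(β) : the minimizer of f_β over the nonnegative orthant, fβ* its value
    (xβ : Fin n → ℝ) (hβnn : ∀ j, 0 ≤ xβ j)
    (hβmin : ∀ x : Fin n → ℝ, (∀ j, 0 ≤ x j) →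
      fpen A b c ub xb β xβ ≤ fpen A b c ub xb β x)
    (fstar : ℝ) (hfstar : fstar = fpen A b c ub xb β xβ)
    -- the constants L_max = β maxᵢ A₋ᵢᵀA₋ᵢ + β⁻¹ and l = 1/β
    (Lmax l : ℝ)
    (hLmax : Lmax = β * (⨆ i : Fin n, ∑ j, (A j i) ^ 2) + β⁻¹)
    (hl : l = 1 / β)
    -- the underlying probability space and the i.i.d. uniform coordinate indices
    (Ω : Type*) [MeasurableSpace Ω] (μ : Measure Ω) [IsProbabilityMeasure μ]
    (idx : ℕ → Ω → Fin n)
    (hmeas : ∀ j, Measurable (idx j))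
    (hunif : ∀ j v, μ {ω | idx j ω = v} = (n : ENNReal)⁻¹)
    (hindep : iIndepFun idx μ)
    -- the SCD iterates
    (x0 : Fin n → ℝ) (hx0 : ∀ j, 0 ≤ x0 j)
    (X : ℕ → Ω → Fin n → ℝ)
    (hX0 : ∀ ω, X 0 ω = x0)
    (hstep : ∀ j ω, X (j + 1) ω = fun i =>
      if i = idx j ω then
        max 0 (X j ω i - (1 / Lmax) * gradf A b c ub xb β (X j ω) i)
      else X j ω i)
    (R : ℝ)
    -- the probability target and accuracy
    (η εbar : ℝ) (hη0 : 0 < η) (hεbar : 0 < εbar)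
    (j : ℕ)
    (hj : (n * (l + Lmax) / l) *
        |Real.log ((Lmax / (2 * η * εbar)) *
          (R ^ 2 + (2 / Lmax) * (fpen A b c ub xb β x0 - fstar)))| ≤ (j : ℝ)) :
    ENNReal.ofReal (1 - η) ≤ μ {ω | fpen A b c ub xb β (X j ω) - fstar < εbar} := by
  obtain ⟨ω₀⟩ := nonempty_of_isProbabilityMeasure μ
  have : Nonempty (Fin n) := ⟨idx 0 ω₀⟩
  have hL : 0 < Lmax := hLmax ▸ add_pos_of_nonneg_of_pos (mul_nonneg hβ.le
    (Real.iSup_nonneg fun i => Finset.sum_nonneg fun _ _ => sq_nonneg _)) (inv_pos.2 hβ)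
  have hl0 : 0 < l := hl ▸ one_div_pos.2 hβ
  have hX := eq_projCoordIter hX0 fun j ω => (hstep j ω).trans
    (funext fun k => (projCoordStep_apply (X j ω) (idx j ω) k).symm)
  have hsum := sum_projCoordIter_sub_le (hLmax ▸ fpen_add_single_le A b c ub xb hβ)
    (hl ▸ fpen_strongConvex A b c ub xb hβ) hL hl0 hx0 hβnn j
  rw [← hfstar] at hsum
  rw [ENNReal.ofReal_le_iff_le_toReal (measure_ne_top _ _), ← measureReal_def]
  simp only [hX]
  refine one_sub_le_measureReal_of_sum_le hmeas hindep (by simpa using hunif)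
    (fun h => sub_nonneg.2 (hfstar ▸ hβmin _ (projCoordIter_nonneg hx0 j h))) hεbar
    (hsum.trans ?_)
  simpa using sub_pow_mul_le_of_log_le (Nat.one_le_cast.2 (Fin.pos (idx 0 ω₀))) hl0 hL
    (sub_nonneg.2 (hfstar ▸ hβmin x0 hx0)) hη0 hεbar hj

/-- Theorem scd, high-probability form: after sufficiently many SCD
iterations, the objective is within ε̄ of optimal with probability at least 1 − η. -/
theorem scd_high_probability_convergence
    {m n : ℕ} (hn : 0 < n)
    (A : Matrix (Fin m) (Fin n) ℝ) (b : Fin m → ℝ) (c : Fin n → ℝ)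
    (ub : Fin m → ℝ) (xb : Fin n → ℝ) (β : ℝ) (hβ : 0 < β)
    -- x(β) : the minimizer of f_β over the nonnegative orthant, fβ* its value
    (xβ : Fin n → ℝ) (hβnn : ∀ j, 0 ≤ xβ j)
    (hβmin : ∀ x : Fin n → ℝ, (∀ j, 0 ≤ x j) →
      fpen A b c ub xb β xβ ≤ fpen A b c ub xb β x)
    (fstar : ℝ) (hfstar : fstar = fpen A b c ub xb β xβ)
    -- the constants L_max = β maxᵢ A₋ᵢᵀA₋ᵢ + β⁻¹ and l = 1/β
    (Lmax l : ℝ)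
    (hLmax : Lmax = β * (⨆ i : Fin n, ∑ j, (A j i) ^ 2) + β⁻¹)
    (hl : l = 1 / β)
    -- the underlying probability space and the i.i.d. uniform coordinate indices
    (Ω : Type*) [MeasurableSpace Ω] (μ : Measure Ω) [IsProbabilityMeasure μ]
    (idx : ℕ → Ω → Fin n)
    (hmeas : ∀ j, Measurable (idx j))
    (hunif : ∀ j v, μ {ω | idx j ω = v} = (n : ENNReal)⁻¹)
    (hindep : iIndepFun idx μ)
    -- the SCD iterates
    (x0 : Fin n → ℝ) (hx0 : ∀ j, 0 ≤ x0 j)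
    (X : ℕ → Ω → Fin n → ℝ)
    (hX0 : ∀ ω, X 0 ω = x0)
    (hstep : ∀ j ω, X (j + 1) ω = fun i =>
      if i = idx j ω then
        max 0 (X j ω i - (1 / Lmax) * gradf A b c ub xb β (X j ω) i)
      else X j ω i)
    -- R bounds the distance of all iterates from x(β), almost surely
    (R : ℝ) (hR : ∀ j, ∀ᵐ ω ∂μ, l2norm (X j ω - xβ) ≤ R)
    -- the probability target and accuracy
    (η εbar : ℝ) (hη0 : 0 < η) (hη1 : η < 1) (hεbar : 0 < εbar)
    (j : ℕ)
    (hj : (n * (l + Lmax) / l) *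
        |Real.log ((Lmax / (2 * η * εbar)) *
          (R ^ 2 + (2 / Lmax) * (fpen A b c ub xb β x0 - fstar)))| ≤ (j : ℝ)) :
    ENNReal.ofReal (1 - η) ≤ μ {ω | fpen A b c ub xb β (X j ω) - fstar < εbar} :=
  scd_high_probability_convergence_general A b c ub xb β hβ xβ hβnn hβmin fstar hfstar Lmax l hLmax
    hl Ω μ idx hmeas hunif hindep x0 hx0 X hX0 hstep R η εbar hη0 hεbar j hj
end
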